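/- Let S be a 0-disjunctive inverse semigroup with zero. Then every s ∈ S^iso satisfies s*s = ss*. -/
import Mathlib

/-- Auxiliary: in a semigroup with an involution-style inverse operation whose
inverses are unique, idempotents commute. -/
private lemma idem_comm_aux {S : Type*} [Semigroup S] (star : S → S)
    (hinv : ∀ s : S, s * star s * s = s)
    (hinv' : ∀ s : S, star s * s * star s = star s)
    (huniq : ∀ s t : S, s * t * s = s → t * s * t = t → t = star s)
    (e f : S) (he : e * e = e) (hf : f * f = f) : e * f = f * e := by
  have star_idem : ∀ a : S, a * a = a → star a = a := by
    intro a ha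
    exact (huniq a a (by rw [ha, ha]) (by rw [ha, ha])).symm
  have prod_idem : ∀ a b : S, a * a = a → b * b = b → (a * b) * (a * b) = a * b := by
    intro a b ha hb
    set x := star (a * b) with hx
    have h1 : (a * b) * x * (a * b) = a * b := hinv (a * b)
    have h2 : x * (a * b) * x = x := hinv' (a * b)
    simp only [mul_assoc] at h1 h2
    have hy : b * x * a = x := by
      apply huniq (a * b) (b * x * a)
      · -- (a*b)*(b*x*a)*(a*b) = a*b
        calc (a * b) * (b * x * a) * (a * b)
            = a * (b * (b * (x * (a * (a * b))))) := by simp only [mul_assoc]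
          _ = a * ((b * b) * (x * ((a * a) * b))) := by simp only [mul_assoc]
          _ = a * (b * (x * (a * b))) := by rw [ha, hb]
          _ = a * b := h1
      · -- (b*x*a)*(a*b)*(b*x*a) = b*x*a
        calc (b * x * a) * (a * b) * (b * x * a)
            = b * (x * ((a * a) * ((b * b) * (x * a)))) := by simp only [mul_assoc]
          _ = b * (x * (a * (b * (x * a)))) := by rw [ha, hb]
          _ = b * ((x * (a * (b * x))) * a) := by simp only [mul_assoc]
          _ = b * (x * a) := by rw [h2]
          _ = b * x * a := by rw [mul_assoc]
    -- x is idempotent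
    have hxx : x * x = x := by
      calc x * x = (b * x * a) * (b * x * a) := by rw [hy]
        _ = b * ((x * (a * (b * x))) * a) := by simp only [mul_assoc]
        _ = b * (x * a) := by rw [h2]
        _ = b * x * a := by rw [mul_assoc]
        _ = x := hy
    -- a*b = star x = x
    have hab : a * b = x := by
      have := huniq x (a * b) (by simpa only [mul_assoc] using h2)
        (by simpa only [mul_assoc] using h1)
      rw [this, star_idem x hxx]
    rw [hab]; exact hxx
  have hef : (e * f) * (e * f) = e * f := prod_idem e f he hf
  have hfe : (f * e) * (f * e) = f * e := prod_idem f e hf he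
  simp only [mul_assoc] at hef hfe
  have h1 : (e * f) * (f * e) * (e * f) = e * f := by
    calc (e * f) * (f * e) * (e * f)
        = e * ((f * f) * ((e * e) * f)) := by simp only [mul_assoc]
      _ = e * (f * (e * f)) := by rw [he, hf]
      _ = e * f := hef
  have h2 : (f * e) * (e * f) * (f * e) = f * e := by
    calc (f * e) * (e * f) * (f * e)
        = f * ((e * e) * ((f * f) * e)) := by simp only [mul_assoc]
      _ = f * (e * (f * e)) := by rw [he, hf]
      _ = f * e := hfe
  have h3 : f * e = star (e * f) := huniq (e * f) (f * e) h1 h2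
  have h4 : e * f = star (e * f) := by
    have hx : (e * f) * (e * f) = e * f := by
      simpa only [mul_assoc] using hef
    exact (huniq (e * f) (e * f) (by rw [hx, hx]) (by rw [hx, hx]))
  rw [h4, h3]

/-- In a 0-disjunctive inverse semigroup with zero, every
`s ∈ S^iso` satisfies `s*s = ss*`. -/
theorem stmt4 {S : Type*} [Semigroup S] (star : S → S) (z : S)
    (hz : ∀ s : S, z * s = z ∧ s * z = z)
    (hinv : ∀ s : S, s * star s * s = s)
    (hinv' : ∀ s : S, star s * s * star s = star s)
    (huniq : ∀ s t : S, s * t * s = s → t * s * t = t → t = star s)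
    (hdis : ∀ e f : S, e * e = e → f * f = f → e ≠ z → e * f = e → e ≠ f →
      ∃ e' : S, e' * e' = e' ∧ e' ≠ z ∧ e' * f = e' ∧ e' ≠ f ∧ e * e' = z)
    (s : S)
    (hs : ∀ f : S, f * f = f → f ≠ z → f * (star s * s) = f →
      s * f * star s * f ≠ z) :
    star s * s = s * star s := by
  have comm := idem_comm_aux star hinv hinv' huniq
  set e := star s * s with hedef
  set f := s * star s with hfdef
  have he : e * e = e := by
    calc e * e = (star s * s * star s) * s := by simp only [hedef, mul_assoc]
      _ = star s * s := by rw [hinv' s]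
  have hf : f * f = f := by
    calc f * f = (s * star s * s) * star s := by simp only [hfdef, mul_assoc]
      _ = s * star s := by rw [hinv s]
  -- trivial case: e = z
  by_cases hez : e = z
  · have hsz : s = z := by
      calc s = s * star s * s := (hinv s).symm
        _ = s * (star s * s) := by rw [mul_assoc]
        _ = s * z := by rw [← hedef, hez]
        _ = z := (hz s).2
    have : f = z := by
      calc f = s * star s := hfdef
        _ = z * star s := by rw [hsz]
        _ = z := (hz (star s)).1
    rw [hez, this]
  -- Step 1: e * f = e
  have hsestar : s * e * star s = f := by
    calc s * e * star s = s * (star s * (s * star s)) := by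
          simp only [hedef, mul_assoc]
      _ = (s * star s * s) * star s := by simp only [mul_assoc]
      _ = s * star s := by rw [hinv s]
      _ = f := hfdef.symm
  have hstarf : star s * f = star s := by
    calc star s * f = star s * s * star s := by rw [hfdef, mul_assoc]
      _ = star s := hinv' s
  have step1 : e * f = e := by
    by_contra hne
    have hefidem : (e * f) * (e * f) = e * f := by
      calc (e * f) * (e * f) = e * ((f * e) * f) := by simp only [mul_assoc]
        _ = e * ((e * f) * f) := by rw [comm f e hf he]
        _ = (e * e) * (f * f) := by simp only [mul_assoc]
        _ = e * f := by rw [he, hf]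
    have hefz : e * f ≠ z := by
      have h := hs e he hez he
      rw [hsestar] at h
      rw [comm e f he hf]
      exact h
    have hefe : (e * f) * e = e * f := by
      calc (e * f) * e = e * (f * e) := by rw [mul_assoc]
        _ = e * (e * f) := by rw [comm f e hf he]
        _ = (e * e) * f := by rw [← mul_assoc]
        _ = e * f := by rw [he]
    obtain ⟨e', he', he'z, he'e, he'ne, hkill⟩ :=
      hdis (e * f) e hefidem he hefz hefe hne
    have hee' : e * e' = e' := by
      calc e * e' = e' * e := (comm e' e he' he).symm
        _ = e' := he'e
    have hfe' : f * e' = z := by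
      calc f * e' = f * (e * e') := by rw [hee']
        _ = (f * e) * e' := by rw [← mul_assoc]
        _ = (e * f) * e' := by rw [comm f e hf he]
        _ = z := hkill
    have hse' : star s * e' = z := by
      calc star s * e' = (star s * f) * e' := by rw [hstarf]
        _ = star s * (f * e') := by rw [mul_assoc]
        _ = star s * z := by rw [hfe']
        _ = z := (hz (star s)).2
    exact hs e' he' he'z he'e (by
      calc s * e' * star s * e' = (s * e') * (star s * e') := by
            simp only [mul_assoc]
        _ = (s * e') * z := by rw [hse']
        _ = z := (hz (s * e')).2)
  -- Step 2: e = f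
  by_contra hne
  obtain ⟨e', he', he'z, he'f, he'ne, hkill⟩ := hdis e f he hf hez step1 hne
  have hfe' : f * e' = e' := by
    calc f * e' = e' * f := (comm e' f he' hf).symm
      _ = e' := he'f
  set g := star s * e' * s with hgdef
  have hgg : g * g = g := by
    calc g * g = star s * (e' * ((s * star s) * (e' * s))) := by
          simp only [hgdef, mul_assoc]
      _ = star s * (e' * (f * (e' * s))) := by rw [← hfdef]
      _ = star s * (e' * ((f * e') * s)) := by simp only [mul_assoc]
      _ = star s * (e' * (e' * s)) := by rw [hfe']
      _ = star s * ((e' * e') * s) := by simp only [mul_assoc]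
      _ = star s * (e' * s) := by rw [he']
      _ = g := by rw [hgdef, mul_assoc]
  have hge : g * e = g := by
    calc g * e = (star s * e') * (s * star s * s) := by
          simp only [hgdef, hedef, mul_assoc]
      _ = (star s * e') * s := by rw [hinv s]
      _ = g := by rw [hgdef]
  have hsgs : s * g * star s = e' := by
    calc s * g * star s = (s * star s) * (e' * (s * star s)) := by
          simp only [hgdef, mul_assoc]
      _ = f * (e' * f) := by rw [← hfdef]
      _ = f * e' := by rw [he'f]
      _ = e' := hfe'
  have hgz : g ≠ z := by
    intro h
    apply he'z
    calc e' = s * g * star s := hsgs.symm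
      _ = s * z * star s := by rw [h]
      _ = z * star s := by rw [(hz s).2]
      _ = z := (hz (star s)).1
  have hge' : g * e' = z := by
    calc g * e' = (g * e) * e' := by rw [hge]
      _ = g * (e * e') := by rw [mul_assoc]
      _ = g * z := by rw [hkill]
      _ = z := (hz g).2
  exact hs g hgg hgz hge (by
    calc s * g * star s * g = e' * g := by rw [hsgs]
      _ = g * e' := comm e' g he' hgg
      _ = z := hge')
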